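/- arXiv:2209.12167 — 5 statements merged into one kernel-verified Lean document; each statement's English description precedes it below -/
import Mathlib

section
/- Let n be a positive integer and Δ a closed non-archimedean (equivalently totally disconnected) subgroup of 𝕋ⁿ such that the quotient 𝕋ⁿ/Δ is a compact connected locally connected abelian Polish group. Then 𝕋ⁿ/Δ is topologically isomorphic to 𝕋ⁿ. -/
/-!
A compact totally disconnected group has arbitrarily small open subgroups, while `𝕋ⁿ` has a
neighbourhood of `1` containing no nontrivial subgroup; hence `Δ` is finite. Its preimage `L`
under `ℝⁿ → 𝕋ⁿ` is then a lattice containing `ℤⁿ`, and the coordinates with respect to a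
`ℤ`-basis of `L` form a linear map `ℝⁿ → ℝⁿ` taking `L` onto `ℤⁿ`. Its matrix is integral because
`ℤⁿ ⊆ L`, so it induces a surjective endomorphism of `𝕋ⁿ` with kernel `Δ`, and a continuous
bijection from the compact space `𝕋ⁿ/Δ` onto `𝕋ⁿ` is a homeomorphism.
-/

open Real Topology Module Matrix FourierTransform

noncomputable section

theorem Circle.eq_one_of_forall_re_pow_pos {z : Circle}
    (h : ∀ k : ℕ, 0 < ((z ^ k : Circle) : ℂ).re) : z = 1 := by
  by_contra hz
  set θ := Complex.arg (z : ℂ)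
  have hθ : 0 < |θ| := abs_pos.2 fun h0 => hz (Circle.arg_eq_zero.1 h0)
  have hθ_lt : |θ| < π / 2 :=
    Complex.abs_arg_lt_pi_div_two_iff.2 (Or.inl (by simpa using h 1))
  -- the first multiple of `θ` leaving the open right half-plane still lies in `[π/2, π)`
  set k := ⌈π / 2 / |θ|⌉₊
  have hk_ge : π / 2 ≤ k * |θ| := (div_le_iff₀ hθ).1 (Nat.le_ceil _)
  have hk_lt : k * |θ| < π := by
    have := (mul_lt_mul_iff_left₀ hθ).2 (Nat.ceil_lt_add_one (by positivity : 0 ≤ π / 2 / |θ|))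
    rw [add_mul, div_mul_cancel₀ _ hθ.ne', one_mul] at this
    linarith
  have hre : ((z ^ k : Circle) : ℂ).re = Real.cos (k * |θ|) := by
    rw [← Circle.exp_arg z, ← Circle.exp_natCast_mul, Circle.coe_exp, Complex.exp_ofReal_mul_I_re]
    rcases abs_choice θ with h | h <;> simp [h, θ]
  have := h k
  rw [hre] at this
  linarith [Real.cos_nonpos_of_pi_div_two_le_of_le hk_ge (by linarith : k * |θ| ≤ π + π / 2)]

theorem Subgroup.finite_of_isCompact_of_isTotallyDisconnected {G : Type*} [Group G]
    [TopologicalSpace G] [IsTopologicalGroup G] {W : Set G} (hW : W ∈ 𝓝 1)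
    (hW_nss : ∀ x : G, (∀ k : ℕ, x ^ k ∈ W) → x = 1) {H : Subgroup G}
    (hc : IsCompact (H : Set G)) (htd : IsTotallyDisconnected (H : Set G)) : Finite H := by
  have : CompactSpace H := isCompact_iff_compactSpace.1 hc
  have : TotallyDisconnectedSpace H := totallyDisconnectedSpace_subtype_iff.2 htd
  obtain ⟨U, hUW, hU, h1U⟩ := mem_nhds_iff.1 (continuous_subtype_val.continuousAt.preimage_mem_nhds
    (by simpa using hW) : ((↑) : H → G) ⁻¹' W ∈ 𝓝 1)
  obtain ⟨V, hV, h1V, hVU⟩ := compact_exists_isClopen_in_isOpen hU h1U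
  obtain ⟨K, hKV⟩ := IsTopologicalGroup.exist_openSubgroup_sub_clopen_nhds_of_one hV h1V
  have hK : (K : Set H) = {1} := by
    refine Set.eq_singleton_iff_unique_mem.2 ⟨K.one_mem, fun x hx => Subtype.ext ?_⟩
    exact hW_nss x fun k => hUW (hVU (hKV (K.pow_mem hx k)))
  have : DiscreteTopology H := discreteTopology_of_isOpen_singleton_one (hK ▸ K.isOpen)
  exact finite_of_compact_of_discrete

theorem finite_of_isClosed_of_isTotallyDisconnected_torus {ι : Type*} [Finite ι]
    {Δ : Subgroup (ι → Circle)} (hc : IsClosed (Δ : Set (ι → Circle)))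
    (htd : IsTotallyDisconnected (Δ : Set (ι → Circle))) : Finite Δ := by
  set W : Set (ι → Circle) := Set.univ.pi fun _ => {z | 0 < (z : ℂ).re}
  have hW : W ∈ 𝓝 1 := set_pi_mem_nhds Set.finite_univ fun _ _ =>
    (isOpen_lt continuous_const (Complex.continuous_re.comp continuous_subtype_val)).mem_nhds
      (by change (0 : ℝ) < ((1 : Circle) : ℂ).re; simp)
  have hW_nss (x : ι → Circle) (hx : ∀ k : ℕ, x ^ k ∈ W) : x = 1 :=
    funext fun i => Circle.eq_one_of_forall_re_pow_pos fun k => hx k i trivial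
  exact Subgroup.finite_of_isCompact_of_isTotallyDisconnected hW hW_nss hc.isCompact htd

theorem AddChar.map_sum_eq_prod {A M ι : Type*} [AddCommMonoid A] [CommMonoid M] (ψ : AddChar A M)
    (s : Finset ι) (f : ι → A) : ψ (∑ i ∈ s, f i) = ∏ i ∈ s, ψ (f i) :=
  map_prod ψ.toMonoidHom (fun i => Multiplicative.ofAdd (f i)) s

theorem Real.fourierChar_eq_one_iff {x : ℝ} : 𝐞 x = 1 ↔ ∃ k : ℤ, x = k := by
  rw [fourierChar_apply', Circle.exp_eq_one]
  refine exists_congr fun k => ⟨fun h => ?_, fun h => by rw [h]; ring⟩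
  nlinarith [pi_pos]

theorem Real.fourierChar_surjective : Function.Surjective 𝐞 := fun z =>
  ⟨Complex.arg z / (2 * π), by
    rw [fourierChar_apply', mul_div_cancel₀ _ (by positivity), Circle.exp_arg]⟩

variable {ι : Type*}

def torusExp (v : ι → ℝ) : ι → Circle := fun i => 𝐞 (v i)

@[simp]
theorem torusExp_zero : torusExp (0 : ι → ℝ) = 1 :=
  funext fun _ => AddChar.map_zero_eq_one _

theorem torusExp_add (v w : ι → ℝ) : torusExp (v + w) = torusExp v * torusExp w :=
  funext fun _ => AddChar.map_add_eq_mul _ _ _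

theorem torusExp_zsmul (k : ℤ) (v : ι → ℝ) : torusExp (k • v) = torusExp v ^ k :=
  funext fun _ => AddChar.map_zsmul_eq_zpow _ _ _

theorem torusExp_eq_one_iff {v : ι → ℝ} : torusExp v = 1 ↔ ∀ i, ∃ k : ℤ, v i = k := by
  simp only [funext_iff, torusExp, Pi.one_apply, fourierChar_eq_one_iff]

theorem torusExp_surjective : Function.Surjective (torusExp (ι := ι)) :=
  .piMap fun _ => fourierChar_surjective

def Matrix.torusHom {κ : Type*} [Fintype ι] (A : Matrix κ ι ℤ) : (ι → Circle) →* (κ → Circle) where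
  toFun x i := ∏ j, x j ^ A i j
  map_one' := by funext i; simp
  map_mul' x y := by funext i; simp [mul_zpow, Finset.prod_mul_distrib]

section torusHom

variable {κ : Type*} [Fintype ι] (A : Matrix κ ι ℤ)

theorem Matrix.continuous_torusHom : Continuous A.torusHom :=
  continuous_pi fun _ => continuous_finsetProd _ fun j _ => (continuous_apply j).zpow _

theorem Matrix.torusHom_torusExp (v : ι → ℝ) :
    A.torusHom (torusExp v) = torusExp (A.map ((↑) : ℤ → ℝ) *ᵥ v) := by
  funext i
  simp only [torusHom, MonoidHom.coe_mk, OneHom.coe_mk, torusExp, mulVec, dotProduct, map_apply,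
    AddChar.map_sum_eq_prod, ← AddChar.map_zsmul_eq_zpow, zsmul_eq_mul]

end torusHom

def torusLattice (Δ : Subgroup (ι → Circle)) : Submodule ℤ (ι → ℝ) where
  carrier := {v | torusExp v ∈ Δ}
  add_mem' {v w} hv hw := by simpa [torusExp_add] using Δ.mul_mem hv hw
  zero_mem' := by simp
  smul_mem' k v hv := by
    change torusExp (k • v) ∈ Δ
    exact torusExp_zsmul k v ▸ Δ.zpow_mem hv k

section torusLattice

variable (Δ : Subgroup (ι → Circle))

theorem mem_torusLattice {v : ι → ℝ} : v ∈ torusLattice Δ ↔ torusExp v ∈ Δ := Iff.rfl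

theorem span_basisFun_le_torusLattice [Finite ι] :
    Submodule.span ℤ (Set.range (Pi.basisFun ℝ ι)) ≤ torusLattice Δ := by
  intro v hv
  rw [Module.Basis.mem_span_iff_repr_mem] at hv
  rw [mem_torusLattice, torusExp_eq_one_iff.2 fun i => by simpa [eq_comm] using hv i]
  exact Δ.one_mem

theorem smul_card_mem_span_basisFun [Finite ι] [Finite Δ] {v : ι → ℝ} (hv : v ∈ torusLattice Δ) :
    (Nat.card Δ : ℝ) • v ∈ Submodule.span ℤ (Set.range (Pi.basisFun ℝ ι)) := by
  have : torusExp ((Nat.card Δ : ℤ) • v) = 1 := by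
    rw [torusExp_zsmul, zpow_natCast]
    exact congrArg Subtype.val (pow_card_eq_one' (x := (⟨_, hv⟩ : Δ)))
  rw [Module.Basis.mem_span_iff_repr_mem]
  intro i
  obtain ⟨k, hk⟩ := torusExp_eq_one_iff.1 this i
  exact ⟨k, by simpa using hk.symm⟩

instance [Finite ι] [Finite Δ] : DiscreteTopology (torusLattice Δ) := by
  have := ZSpan.discreteTopology_pi_basisFun (ι := ι)
  have hm : (Nat.card Δ : ℝ) ≠ 0 := by exact_mod_cast Nat.card_pos.ne'
  refine .of_continuous_injective
    (f := fun v : torusLattice Δ => (⟨_, smul_card_mem_span_basisFun Δ v.2⟩ :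
      Submodule.span ℤ (Set.range (Pi.basisFun ℝ ι)))) (by fun_prop) fun v w h => ?_
  exact Subtype.ext (smul_right_injective _ hm (congrArg Subtype.val h))

instance [Fintype ι] [Finite Δ] : IsZLattice ℝ (torusLattice Δ) where
  span_top := top_le_iff.1 <| (Pi.basisFun ℝ ι).span_eq.symm.le.trans <|
    Submodule.span_le.2 fun _ hv => Submodule.subset_span (span_basisFun_le_torusLattice Δ
      (Submodule.subset_span hv))

section Basis

variable [Fintype ι] [Finite Δ]

def torusLatticeBasis : Basis ι ℝ (ι → ℝ) :=
  (IsZLattice.basis (torusLattice Δ)).ofZLatticeBasis ℝ (torusLattice Δ)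

theorem mem_torusLattice_iff_repr {v : ι → ℝ} :
    v ∈ torusLattice Δ ↔ ∀ i, ∃ k : ℤ, (torusLatticeBasis Δ).repr v i = k := by
  rw [← (IsZLattice.basis (torusLattice Δ)).ofZLatticeBasis_span ℝ, torusLatticeBasis,
    Module.Basis.mem_span_iff_repr_mem]
  simp [eq_comm]

theorem exists_torusHom_surjective_ker_eq :
    ∃ A : Matrix ι ι ℤ, Function.Surjective A.torusHom ∧ A.torusHom.ker = Δ := by
  set b := torusLatticeBasis Δ
  have hint (i j : ι) : ∃ k : ℤ, b.toMatrix (Pi.basisFun ℝ ι) i j = k :=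
    (mem_torusLattice_iff_repr Δ).1 (span_basisFun_le_torusLattice Δ
      (Submodule.subset_span ⟨j, rfl⟩)) i
  obtain ⟨A, hA⟩ : ∃ A : Matrix ι ι ℤ, A.map (↑) = b.toMatrix (Pi.basisFun ℝ ι) :=
    ⟨.of fun i j => (hint i j).choose, by ext i j; exact (hint i j).choose_spec.symm⟩
  have hexp (v : ι → ℝ) : A.torusHom (torusExp v) = torusExp (b.repr v) := by
    rw [A.torusHom_torusExp, hA, ← (Pi.basisFun ℝ ι).toMatrix_mulVec_repr b v,
      funext (Pi.basisFun_repr ℝ ι v)]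
  refine ⟨A, fun x => ?_, ?_⟩
  · obtain ⟨w, rfl⟩ := torusExp_surjective x
    exact ⟨torusExp (b.equivFun.symm w), by
      rw [hexp, ← b.equivFun_apply, b.equivFun.apply_symm_apply]⟩
  · ext x
    obtain ⟨v, rfl⟩ := torusExp_surjective x
    rw [MonoidHom.mem_ker, hexp, torusExp_eq_one_iff, ← mem_torusLattice_iff_repr, mem_torusLattice]

end Basis

end torusLattice

def QuotientGroup.continuousMulEquivOfSurjective {G H : Type*} [Group G] [TopologicalSpace G]
    [CompactSpace G] [Group H] [TopologicalSpace H] [T2Space H] (f : G →* H) (hf : Continuous f)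
    (hs : Function.Surjective f) : G ⧸ f.ker ≃ₜ* H :=
  have hcont : Continuous (QuotientGroup.quotientKerEquivOfSurjective f hs) :=
    (QuotientGroup.isQuotientMap_mk _).continuous_iff.2 hf
  { QuotientGroup.quotientKerEquivOfSurjective f hs, hcont.homeoOfEquivCompactToT2 with }

end

theorem stmt_9_general (n : ℕ) (Δ : Subgroup (Fin n → Circle))
    (hclosed : IsClosed (Δ : Set (Fin n → Circle)))
    (htd : IsTotallyDisconnected (Δ : Set (Fin n → Circle))) :
    ∃ e : ((Fin n → Circle) ⧸ Δ) ≃* (Fin n → Circle),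
      Continuous e ∧ Continuous e.symm := by
  have : Finite Δ := finite_of_isClosed_of_isTotallyDisconnected_torus hclosed htd
  obtain ⟨A, hA, rfl⟩ := exists_torusHom_surjective_ker_eq Δ
  let e := QuotientGroup.continuousMulEquivOfSurjective A.torusHom A.continuous_torusHom hA
  exact ⟨e.toMulEquiv, e.continuous_toFun, e.continuous_invFun⟩

/-- Let `n` be a positive integer and `Δ` a closed totally disconnected (equivalently,
non-archimedean) subgroup of `𝕋ⁿ` such that the quotient `𝕋ⁿ/Δ` is locally connected
(it is automatically a compact connected abelian Polish group).  Then `𝕋ⁿ/Δ` is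
topologically isomorphic to `𝕋ⁿ`. -/
theorem stmt_9 (n : ℕ) (hn : 0 < n) (Δ : Subgroup (Fin n → Circle))
    (hclosed : IsClosed (Δ : Set (Fin n → Circle)))
    (htd : IsTotallyDisconnected (Δ : Set (Fin n → Circle)))
    (hlc : LocallyConnectedSpace ((Fin n → Circle) ⧸ Δ)) :
    ∃ e : ((Fin n → Circle) ⧸ Δ) ≃* (Fin n → Circle),
      Continuous e ∧ Continuous e.symm :=
  stmt_9_general n Δ hclosed htd
end

section
/- Every nontrivial proper closed subgroup of a P-adic solenoid Σ_P is totally disconnected. -/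
/-- The `P`-adic solenoid, as a subgroup of `𝕋^ω`. -/
noncomputable def solenoid (P : ℕ → ℕ) : Subgroup (ℕ → Circle) where
  carrier := {g : ℕ → Circle | ∀ l, g l = g (l + 1) ^ P l}
  one_mem' := by intro l; simp
  mul_mem' := by
    intro a b ha hb l
    simp only [Pi.mul_apply, mul_pow, ← ha l, ← hb l]
  inv_mem' := by
    intro a ha l
    simp only [Pi.inv_apply, inv_pow, ← ha l]

/-!
It suffices to show that a closed connected subgroup `K ≠ Σ_P` of `Σ_P` is trivial, since the
identity component of `H` is such a subgroup. If every coordinate projection of `K` were onto,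
then `K` would be dense in `Σ_P`, because an element of `Σ_P` is determined up to level `l` by its
`l`-th coordinate. So some projection of `K` is a proper closed subgroup of the circle, hence
finite, hence trivial by connectedness. The relation `g l = g (l + 1) ^ P l` then traps the next
coordinate among the `P l`-th roots of unity, so it is trivial as well, and going down is free.
-/

open Set Filter

theorem Circle.finite_setOf_pow_eq_one {n : ℕ} (hn : n ≠ 0) :
    {z : Circle | z ^ n = 1}.Finite := by
  refine ((Polynomial.nthRootsFinset n (1 : ℂ)).finite_toSet.preimage
    Circle.coe_injective.injOn).subset fun (z : Circle) (hz : z ^ n = 1) => ?_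
  have : (z : ℂ) ^ n = 1 := by rw [← Circle.coe_pow, hz, Circle.coe_one]
  exact (Polynomial.mem_nthRootsFinset (Nat.pos_of_ne_zero hn) 1).2 this

theorem Circle.eq_top_or_finite_of_isClosed {S : Subgroup Circle}
    (hS : IsClosed (S : Set Circle)) : S = ⊤ ∨ (S : Set Circle).Finite := by
  let e := AddCircle.homeomorphCircle (T := 1) one_ne_zero
  let s : AddSubgroup (AddCircle (1 : ℝ)) :=
    { carrier := e ⁻¹' S
      add_mem' := fun hx hy => by
        simpa [e, AddCircle.homeomorphCircle_apply, AddCircle.toCircle_add] using S.mul_mem hx hy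
      zero_mem' := by simp [e, AddCircle.homeomorphCircle_apply]
      neg_mem' := fun hx => by
        simpa [e, AddCircle.homeomorphCircle_apply, AddCircle.toCircle_neg] using S.inv_mem hx }
  by_cases hd : Dense (s : Set (AddCircle (1 : ℝ)))
  · left
    have hs : (s : Set (AddCircle (1 : ℝ))) = univ := by
      have hclosed : IsClosed (s : Set (AddCircle (1 : ℝ))) := hS.preimage e.continuous
      rw [← hclosed.closure_eq, hd.closure_eq]
    rw [eq_top_iff]
    intro z _
    simpa [s] using congrArg (e.symm z ∈ ·) hs
  · right
    obtain ⟨a, ha, hsa⟩ : ∃ a, addOrderOf a ≠ 0 ∧ s = .zmultiples a := by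
      simpa [AddCircle.dense_addSubgroup_iff_ne_zmultiples] using hd
    have hfin : (s : Set (AddCircle (1 : ℝ))).Finite := by
      rw [hsa, finite_zmultiples, ← addOrderOf_pos_iff]
      exact Nat.pos_of_ne_zero ha
    simpa [s, e.image_preimage] using hfin.image e

theorem Subgroup.le_ker_of_isPreconnected_of_finite {G M : Type*} [Group G] [TopologicalSpace G]
    [Group M] [TopologicalSpace M] [T1Space M] {K : Subgroup G} (hK : IsPreconnected (K : Set G))
    {f : G →* M} (hf : Continuous f) (hfin : (K.map f : Set M).Finite) : K ≤ f.ker :=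
  fun _ hg => (hK.constant_of_mapsTo hfin.isDiscrete hf.continuousOn
    (fun _ hx => mem_map_of_mem f hx) hg K.one_mem).trans f.map_one

namespace solenoid

local notation "ev" l => Pi.evalMonoidHom (fun _ : ℕ => Circle) l

variable {P : ℕ → ℕ} {K : Subgroup (ℕ → Circle)}

theorem apply_eq_of_le {g k : ℕ → Circle} (hg : g ∈ solenoid P) (hk : k ∈ solenoid P)
    {j l : ℕ} (hjl : j ≤ l) (h : g l = k l) : g j = k j := by
  induction l, hjl using Nat.le_induction with
  | base => exact h
  | succ l _ ih => exact ih (by rw [hg l, hk l, h])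

theorem le_of_forall_map_eval_eq_top (hK : K ≤ solenoid P)
    (hclosed : IsClosed (K : Set (ℕ → Circle))) (htop : ∀ l, K.map (ev l) = ⊤) :
    solenoid P ≤ K := by
  intro g hg
  choose k hkK hkg using fun l => (htop l ▸ Subgroup.mem_top (g l) : g l ∈ K.map (ev l))
  have hk : Tendsto k atTop (nhds g) := tendsto_pi_nhds.2 fun j => by
    refine tendsto_const_nhds.congr' ?_
    filter_upwards [eventually_ge_atTop j] with l hjl
    exact apply_eq_of_le hg (hK (hkK l)) hjl (hkg l).symm
  exact hclosed.mem_of_tendsto hk (Eventually.of_forall hkK)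

theorem forall_apply_succ_eq_one (hK : K ≤ solenoid P)
    (hconn : IsPreconnected (K : Set (ℕ → Circle))) {l : ℕ} (hP : P l ≠ 0)
    (h : ∀ g ∈ K, g l = 1) : ∀ g ∈ K, g (l + 1) = 1 := by
  have hfin : (K.map (ev (l + 1)) : Set Circle).Finite := by
    refine (Circle.finite_setOf_pow_eq_one hP).subset ?_
    rintro _ ⟨g, hg, rfl⟩
    exact (hK hg l).symm.trans (h g hg)
  exact K.le_ker_of_isPreconnected_of_finite hconn (continuous_apply _) hfin

theorem eq_bot_of_isPreconnected (hP : ∀ l, P l ≠ 0) (hK : K ≤ solenoid P)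
    (hclosed : IsClosed (K : Set (ℕ → Circle))) (hconn : IsPreconnected (K : Set (ℕ → Circle)))
    (hne : K ≠ solenoid P) : K = ⊥ := by
  obtain ⟨l, hl⟩ : ∃ l, K.map (ev l) ≠ ⊤ := by
    by_contra! htop
    exact hne (le_antisymm hK (le_of_forall_map_eval_eq_top hK hclosed htop))
  have hfin : (K.map (ev l) : Set Circle).Finite :=
    (Circle.eq_top_or_finite_of_isClosed
      (hclosed.isCompact.image (continuous_apply l)).isClosed).resolve_left hl
  have hup : ∀ d, ∀ g ∈ K, g (l + d) = 1 := by
    intro d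
    induction d with
    | zero => exact K.le_ker_of_isPreconnected_of_finite hconn (continuous_apply l) hfin
    | succ d ih => exact forall_apply_succ_eq_one hK hconn (hP _) ih
  refine (Subgroup.eq_bot_iff_forall K).2 fun g hg => funext fun m => ?_
  exact apply_eq_of_le (hK hg) (one_mem _) (Nat.le_add_left m l) (hup m g hg)

end solenoid

theorem stmt_11_general (P : ℕ → ℕ) (hP : ∀ i, (P i).Prime) (H : Subgroup (ℕ → Circle))
    (hsub : (H : Set (ℕ → Circle)) ⊆ (solenoid P : Set (ℕ → Circle)))
    (hclosed : IsClosed (H : Set (ℕ → Circle)))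
    (hproper : (H : Set (ℕ → Circle)) ≠ (solenoid P : Set (ℕ → Circle))) :
    IsTotallyDisconnected (H : Set (ℕ → Circle)) := by
  rw [← totallyDisconnectedSpace_subtype_iff]
  change TotallyDisconnectedSpace H
  rw [totallyDisconnectedSpace_iff_connectedComponent_one]
  set K := (Subgroup.connectedComponentOfOne H).map H.subtype
  have hKH : K ≤ H := Subgroup.map_subtype_le _
  have hKclosed : IsClosed (K : Set (ℕ → Circle)) :=
    hclosed.isClosedEmbedding_subtypeVal.isClosedMap _ isClosed_connectedComponent
  have hKconn : IsPreconnected (K : Set (ℕ → Circle)) :=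
    isPreconnected_connectedComponent.image _ continuous_subtype_val.continuousOn
  have hKne : K ≠ solenoid P := fun h =>
    hproper (congrArg SetLike.coe (le_antisymm hsub (h ▸ hKH)))
  have hK : K = ⊥ := solenoid.eq_bot_of_isPreconnected (fun l => (hP l).ne_zero)
    (hKH.trans hsub) hKclosed hKconn hKne
  exact congrArg SetLike.coe ((Subgroup.map_eq_bot_iff_of_injective _ H.subtype_injective).1 hK)

/-- Every nontrivial proper closed subgroup of a `P`-adic solenoid `Σ_P` (`P` a sequence
of primes) is totally disconnected.  Subgroups of `Σ_P` are formalized as subgroups `H`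
of `𝕋^ω` with `H ⊆ Σ_P`. -/
theorem stmt_11 (P : ℕ → ℕ) (hP : ∀ i, (P i).Prime) (H : Subgroup (ℕ → Circle))
    (hsub : (H : Set (ℕ → Circle)) ⊆ (solenoid P : Set (ℕ → Circle)))
    (hclosed : IsClosed (H : Set (ℕ → Circle)))
    (hnontriv : H ≠ ⊥)
    (hproper : (H : Set (ℕ → Circle)) ≠ (solenoid P : Set (ℕ → Circle))) :
    IsTotallyDisconnected (H : Set (ℕ → Circle)) :=
  stmt_11_general P hP H hsub hclosed hproper
end

section
/- For sequences of primes P and Q, there exists a nonzero continuous homomorphism f : Σ_P → Σ_Q if and only if there exists a surjective continuous homomorphism g : Σ_P → Σ_Q. -/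
/-!
A continuous homomorphism `f : Σ_P → Σ_Q` that is nontrivial is already nontrivial on the dense
one-parameter subgroup `t ↦ (exp (t / (P 0 ⋯ P (l-1))))_l` of `Σ_P`, hence on it in every late
enough coordinate `n`. The image of `Σ_P` in the `n`-th circle is then a closed subgroup
containing elements `≠ 1` arbitrarily close to `1`, namely the images of `t / 2 ^ j`, so it is the
whole circle. A point of `Σ_Q` is determined by its late coordinates, so the image of `f` is
dense, and being compact it is all of `Σ_Q`. Conversely `Σ_Q` is nontrivial, so a surjection
onto it is not trivial.
-/

open Filter Topology Function

theorem Continuous.surjective_of_denseRange {X Y : Type*} [TopologicalSpace X] [CompactSpace X]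
    [TopologicalSpace Y] [T2Space Y] {f : X → Y} (hf : Continuous f) (hd : DenseRange f) :
    Surjective f := by
  rw [← Set.range_eq_univ, ← hd.closure_range, (isCompact_range hf).isClosed.closure_eq]

namespace Circle

theorem dense_subgroup_of_tendsto_one (K : Subgroup Circle) {u : ℕ → Circle} (hu : ∀ j, u j ∈ K)
    (hne : ∀ j, u j ≠ 1) (hlim : Tendsto u atTop (𝓝 1)) : Dense (K : Set Circle) := by
  let A : AddSubgroup ℝ := K.toAddSubgroup.comap expHom
  have hA : ∀ t, t ∈ A ↔ exp t ∈ K := fun t => Iff.rfl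
  have harg : Tendsto (fun j => Complex.arg (u j)) atTop (𝓝 0) := by
    have hc : ContinuousAt (fun z : Circle => Complex.arg z) 1 :=
      (Complex.continuousAt_arg (by simp)).comp continuous_subtype_val.continuousAt
    simpa [Function.comp_def] using hc.tendsto.comp hlim
  have hdense : Dense (A : Set ℝ) := by
    refine A.dense_of_not_isolated_zero fun ε hε => ?_
    obtain ⟨j, hj⟩ := (harg.abs.eventually (gt_mem_nhds (by simpa using hε))).exists
    have hpos : 0 < |Complex.arg (u j)| := abs_pos.mpr (arg_eq_zero.not.mpr (hne j))
    refine ⟨_, ?_, hpos, hj⟩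
    rcases abs_choice (Complex.arg (u j)) with h | h <;> rw [h, hA]
    · simpa [exp_arg] using hu j
    · simpa [exp_arg] using K.inv_mem (hu j)
  exact (exp_surjective.denseRange.dense_image exp.continuous hdense).mono
    (Set.image_subset_iff.mpr fun t ht => ht)

theorem dense_subgroup_of_addChar (K : Subgroup Circle) (χ : AddChar ℝ Circle)
    (hχ : Continuous χ) (hK : ∀ s, χ s ∈ K) {t : ℝ} (ht : χ t ≠ 1) : Dense (K : Set Circle) := by
  refine dense_subgroup_of_tendsto_one K (u := fun j => χ (t / 2 ^ j)) (fun j => hK _) ?_ ?_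
  · intro j hj
    apply ht
    have h : (2 ^ j : ℕ) • (t / 2 ^ j) = t := by rw [nsmul_eq_mul]; push_cast; field_simp
    rw [← h, AddChar.map_nsmul_eq_pow, hj, one_pow]
  · have h : Tendsto (fun j : ℕ => t / 2 ^ j) atTop (𝓝 0) := by
      simpa using tendsto_const_nhds.div_atTop (tendsto_pow_atTop_atTop_of_one_lt one_lt_two)
    simpa [Function.comp_def] using (hχ.tendsto 0).comp h

end Circle

namespace solenoid

variable {P Q : ℕ → ℕ}

theorem apply_eq_apply_pow_prod {x : ℕ → Circle} (hx : x ∈ solenoid P) {l m : ℕ} (h : l ≤ m) :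
    x l = x m ^ ∏ i ∈ Finset.Ico l m, P i := by
  induction m, h using Nat.le_induction with
  | base => simp
  | succ m hm ih => rw [ih, Finset.prod_Ico_succ_top hm, hx m, ← pow_mul, mul_comm (P m)]

theorem isClosed (P : ℕ → ℕ) : IsClosed (solenoid P : Set (ℕ → Circle)) := by
  have : (solenoid P : Set (ℕ → Circle)) = ⋂ l, {g | g l = g (l + 1) ^ P l} := by
    ext g; simp [solenoid]
  rw [this]
  exact isClosed_iInter fun l => isClosed_eq (continuous_apply l) ((continuous_apply _).pow _)

instance (P : ℕ → ℕ) : CompactSpace (solenoid P) :=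
  isCompact_iff_compactSpace.mp (isClosed P).isCompact

theorem dense_of_frequently_apply_eq (s : Set (solenoid Q))
    (hs : ∀ x : solenoid Q, ∃ᶠ n in atTop, ∃ y ∈ s, (y : ℕ → Circle) n = (x : ℕ → Circle) n) :
    Dense s := by
  intro x
  choose n hn y hys hy using fun m => frequently_atTop.mp (hs x) m
  have hlim : Tendsto y atTop (𝓝 x) := by
    rw [tendsto_subtype_rng, tendsto_pi_nhds]
    intro l
    refine tendsto_const_nhds.congr' ?_
    filter_upwards [eventually_ge_atTop l] with m hlm
    have hl : l ≤ n m := hlm.trans (hn m)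
    rw [apply_eq_apply_pow_prod x.2 hl, apply_eq_apply_pow_prod (y m).2 hl, hy m]
  exact mem_closure_of_tendsto hlim (Eventually.of_forall hys)

theorem prod_range_ne_zero (hP : ∀ i, P i ≠ 0) (l : ℕ) :
    ∏ i ∈ Finset.range l, (P i : ℝ) ≠ 0 :=
  Finset.prod_ne_zero_iff.mpr fun i _ => Nat.cast_ne_zero.mpr (hP i)

theorem line_mem (hP : ∀ i, P i ≠ 0) (t : ℝ) :
    (fun l => Circle.exp (t / ∏ i ∈ Finset.range l, (P i : ℝ))) ∈ solenoid P := by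
  intro l
  have hl := prod_range_ne_zero hP l
  have hPl : (P l : ℝ) ≠ 0 := Nat.cast_ne_zero.mpr (hP l)
  simp only [← Circle.exp_natCast_mul, Finset.prod_range_succ]
  congr 1
  field_simp

/-- The one-parameter subgroup `t ↦ (exp (t / (P 0 ⋯ P (l-1))))_l` of the solenoid. -/
noncomputable def line (hP : ∀ i, P i ≠ 0) : AddChar ℝ (solenoid P) where
  toFun t := ⟨_, line_mem hP t⟩
  map_zero_eq_one' := by ext; simp
  map_add_eq_mul' s t := by ext l; simp [add_div, Circle.exp_add]

theorem line_apply (hP : ∀ i, P i ≠ 0) (t : ℝ) (l : ℕ) :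
    (line hP t : ℕ → Circle) l = Circle.exp (t / ∏ i ∈ Finset.range l, (P i : ℝ)) :=
  rfl

theorem continuous_line (hP : ∀ i, P i ≠ 0) : Continuous (line hP) :=
  (continuous_pi fun _ => Circle.exp.continuous.comp (continuous_id.div_const _)).subtype_mk _

theorem denseRange_line (hP : ∀ i, P i ≠ 0) : DenseRange (line hP) := by
  refine dense_of_frequently_apply_eq _ fun x => frequently_atTop.mpr fun m => ?_
  refine ⟨m, le_rfl, _, ⟨(∏ i ∈ Finset.range m, (P i : ℝ)) * Complex.arg (x.1 m), rfl⟩, ?_⟩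
  rw [line_apply, mul_div_cancel_left₀ _ (prod_range_ne_zero hP m), Circle.exp_arg]

theorem exists_ne_one (hP : ∀ i, P i ≠ 0) : ∃ x : solenoid P, x ≠ 1 :=
  ⟨line hP Real.pi, fun h => Circle.exp_pi_ne_one <| by
    simpa [line_apply] using congr_fun (congr_arg Subtype.val h) 0⟩

theorem surjective_of_continuous_of_ne_one (hP : ∀ i, P i ≠ 0) {f : solenoid P →* solenoid Q}
    (hf : Continuous f) (hf1 : f ≠ 1) : Surjective f := by
  obtain ⟨t, ht⟩ : ∃ t, f (line hP t) ≠ 1 := by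
    by_contra! h
    exact hf1 <| DFunLike.coe_injective <| hf.ext_on (denseRange_line hP) continuous_const
      (by rintro _ ⟨t, rfl⟩; exact h t)
  obtain ⟨m, hm⟩ : ∃ m, (f (line hP t) : ℕ → Circle) m ≠ 1 := by
    by_contra! h
    exact ht (Subtype.ext (funext h))
  have hcoord : ∀ n ≥ m, Surjective fun x => (f x : ℕ → Circle) n := by
    intro n hn
    let ρ : solenoid P →* Circle := (Pi.evalMonoidHom _ n).comp ((solenoid Q).subtype.comp f)
    have hρ : Continuous ρ := (continuous_apply n).comp (continuous_subtype_val.comp hf)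
    have hρt : ρ (line hP t) ≠ 1 := fun h => hm <| by
      rw [apply_eq_apply_pow_prod (f _).2 hn, show (f (line hP t) : ℕ → Circle) n = 1 from h,
        one_pow]
    refine hρ.surjective_of_denseRange ?_
    rw [DenseRange, ← MonoidHom.coe_range]
    exact Circle.dense_subgroup_of_addChar ρ.range (ρ.compAddChar (line hP))
      (hρ.comp (continuous_line hP)) (fun s => ⟨_, rfl⟩) hρt
  refine hf.surjective_of_denseRange (dense_of_frequently_apply_eq _ fun x => ?_)
  refine frequently_atTop.mpr fun k => ?_
  obtain ⟨p, hp⟩ := hcoord (max k m) (le_max_right _ _) ((x : ℕ → Circle) (max k m))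
  exact ⟨max k m, le_max_left _ _, f p, ⟨p, rfl⟩, hp⟩

end solenoid

/-- For sequences of primes `P` and `Q`, there exists a nonzero continuous homomorphism
`f : Σ_P → Σ_Q` if and only if there exists a surjective continuous homomorphism
`g : Σ_P → Σ_Q`. -/
theorem stmt_12 (P Q : ℕ → ℕ) (hP : ∀ i, (P i).Prime) (hQ : ∀ i, (Q i).Prime) :
    (∃ f : solenoid P →* solenoid Q, Continuous f ∧ f ≠ 1) ↔
    (∃ g : solenoid P →* solenoid Q, Continuous g ∧ Function.Surjective g) := by
  constructor
  · rintro ⟨f, hfc, hf1⟩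
    exact ⟨f, hfc, solenoid.surjective_of_continuous_of_ne_one (fun i => (hP i).ne_zero) hfc hf1⟩
  · rintro ⟨g, hgc, hgs⟩
    refine ⟨g, hgc, fun hg1 => ?_⟩
    obtain ⟨x, hx⟩ := solenoid.exists_ne_one fun i => (hQ i).ne_zero
    obtain ⟨p, rfl⟩ := hgs x
    exact hx (by rw [hg1]; rfl)
end

section
/- The dual group of the P-adic solenoid Σ_P is isomorphic (as an abstract group) to the additive group { m / (P(0)P(1)⋯P(n)) : m ∈ ℤ, n ∈ ℕ } ⊆ ℚ. -/
/-!
A character `χ` of `Σ_P` is continuous at `1`, so some basic neighbourhood of `1`, and with it the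
kernel of a coordinate projection `g ↦ g n`, is mapped into the right half of the circle. The
circle has no small subgroups, so `χ` kills that kernel and factors through `g ↦ g n`; lifting
along `Circle.exp` then shows `χ g = (g n) ^ m` for some integer `m`. The character
`g ↦ (g n) ^ m` is sent to `m / (P 0 ⋯ P (n - 1))`: the relation `g n = (g L) ^ (P n ⋯ P (L - 1))`
makes this well defined and additive, and injectivity holds because every coordinate projection
is surjective.
-/
open Real Finset

theorem Finset.prod_natCast_ne_zero {ι K : Type*} [CommSemiring K] [NoZeroDivisors K] [CharZero K]
    {f : ι → ℕ} (hf : ∀ i, f i ≠ 0) (s : Finset ι) : ∏ i ∈ s, (f i : K) ≠ 0 :=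
  prod_ne_zero_iff.mpr fun i _ => Nat.cast_ne_zero.mpr (hf i)

theorem Circle.eq_zero_of_forall_zpow_eq_one {k : ℤ} (h : ∀ z : Circle, z ^ k = 1) : k = 0 := by
  by_contra hk
  apply Circle.exp_pi_ne_one
  rw [← h (Circle.exp (π / k)), ← Circle.exp_intCast_mul, mul_div_cancel₀ _ (by exact_mod_cast hk)]

theorem Circle.exists_eq_exp_mul_of_continuous_of_map_add {g : ℝ → Circle} (hcont : Continuous g)
    (hg : ∀ s t, g (s + t) = g s * g t) : ∃ c : ℝ, ∀ t, g t = Circle.exp (c * t) := by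
  obtain ⟨F, ⟨hF0, hF⟩, hFuniq⟩ :=
    Circle.isCoveringMap_exp.existsUnique_continuousMap_lifts ⟨g, hcont⟩ 0 0
      (by simpa [eq_comm] using hg 0 0)
  have hFg (t : ℝ) : Circle.exp (F t) = g t := congrFun hF t
  have hFadd (s t : ℝ) : F (s + t) = F s + F t := by
    -- `t ↦ F (s + t) - F s` is another lift of `g` vanishing at `0`
    let G : C(ℝ, ℝ) := ⟨fun t => F (s + t) - F s, by fun_prop⟩
    have hG : G = F := hFuniq G ⟨by simp [G], funext fun t => by simp [G, hFg, hg]⟩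
    have := congrFun (congrArg DFunLike.coe hG) t
    simp [G] at this
    linarith
  let Fhom : ℝ →+ ℝ := ⟨⟨F, by simpa using hF0⟩, hFadd⟩
  refine ⟨F 1, fun t => ?_⟩
  have := map_real_smul Fhom F.continuous t 1
  simp [Fhom] at this
  rw [← hFg, this, mul_comm]

namespace solenoid

variable {P : ℕ → ℕ}

theorem apply_eq_pow_prod_Ico {g : ℕ → Circle} (hg : g ∈ solenoid P) {a b : ℕ} (hab : a ≤ b) :
    g a = g b ^ ∏ i ∈ Ico a b, P i := by
  induction b, hab using Nat.le_induction with
  | base => simp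
  | succ b hab ih => rw [prod_Ico_succ_top hab, ih, hg b, ← pow_mul, mul_comm]

theorem exists_map_eq_one_of_apply_eq_one (χ : solenoid P →ₜ* Circle) :
    ∃ n, ∀ g : solenoid P, (g : ℕ → Circle) n = 1 → χ g = 1 := by
  have hU : χ ⁻¹' Circle.centeredArc (π / 2) ∈ nhds (1 : solenoid P) := by
    refine (Circle.isOpen_centeredArc _).preimage (map_continuous χ) |>.mem_nhds ?_
    rw [Set.mem_preimage, map_one, Circle.mem_centeredArc (by linarith [pi_pos])]
    simp [pi_pos]
  rw [nhds_subtype, Filter.mem_comap] at hU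
  obtain ⟨T, hT, hTU⟩ := hU
  rw [nhds_pi, Filter.mem_pi] at hT
  obtain ⟨I, hI, t, ht, hIT⟩ := hT
  obtain ⟨n, hn⟩ := hI.bddAbove
  refine ⟨n, fun g hg => Circle.eq_one_of_forall_pow_mem_centeredArc_pi_div_two fun k _ => ?_⟩
  rw [← map_pow]
  refine hTU (hIT fun i hi => ?_)
  rw [SubmonoidClass.coe_pow, Pi.pow_apply, apply_eq_pow_prod_Ico g.2 (hn hi), hg, one_pow,
    one_pow]
  exact mem_of_mem_nhds (ht i)

noncomputable def expLift (hP : ∀ i, P i ≠ 0) (n : ℕ) (t : ℝ) : solenoid P :=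
  ⟨fun l => Circle.exp (t * (∏ i ∈ range n, (P i : ℝ)) / ∏ i ∈ range l, (P i : ℝ)), fun l => by
    have hPl : (P l : ℝ) ≠ 0 := Nat.cast_ne_zero.mpr (hP l)
    have hprod := prod_natCast_ne_zero (K := ℝ) hP (range l)
    rw [← Circle.exp_natCast_mul, prod_range_succ]
    field_simp⟩

section expLift

variable (hP : ∀ i, P i ≠ 0) (n : ℕ)

@[simp]
theorem expLift_apply_self (t : ℝ) : (expLift hP n t : ℕ → Circle) n = Circle.exp t := by
  simp [expLift, mul_div_assoc, div_self (prod_natCast_ne_zero (K := ℝ) hP (range n))]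

theorem expLift_add (s t : ℝ) : expLift hP n (s + t) = expLift hP n s * expLift hP n t := by
  ext l : 2
  simp [expLift, add_mul, add_div, Circle.exp_add]

theorem continuous_expLift : Continuous (expLift hP n) :=
  Continuous.subtype_mk (continuous_pi fun l => by fun_prop) _

end expLift

variable (P) in
noncomputable def coordChar (n : ℕ) (m : ℤ) : solenoid P →ₜ* Circle where
  toFun g := (g : ℕ → Circle) n ^ m
  map_one' := by simp
  map_mul' g h := by simp [mul_zpow]
  continuous_toFun := ((continuous_apply n).comp continuous_subtype_val).zpow m

@[simp]
theorem coordChar_apply (n : ℕ) (m : ℤ) (g : solenoid P) :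
    coordChar P n m g = (g : ℕ → Circle) n ^ m :=
  rfl

theorem exists_eq_coordChar (hP : ∀ i, P i ≠ 0) (χ : solenoid P →ₜ* Circle) :
    ∃ n m, χ = coordChar P n m := by
  obtain ⟨n, hn⟩ := exists_map_eq_one_of_apply_eq_one χ
  obtain ⟨c, hc⟩ := Circle.exists_eq_exp_mul_of_continuous_of_map_add
    (g := fun t => χ (expLift hP n t)) ((map_continuous χ).comp (continuous_expLift hP n))
    fun s t => by simp [expLift_add]
  -- `expLift hP n (2 * π)` lies in the kernel of the `n`-th coordinate, so `c` is an integer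
  obtain ⟨m, hm⟩ : ∃ m : ℤ, c = m := by
    have := hc (2 * π)
    rw [hn _ (by simp), eq_comm, Circle.exp_eq_one] at this
    obtain ⟨m, hm⟩ := this
    exact ⟨m, mul_right_cancel₀ (by positivity) hm⟩
  refine ⟨n, m, ContinuousMonoidHom.ext fun g => ?_⟩
  obtain ⟨t, ht⟩ := Circle.exp_surjective ((g : ℕ → Circle) n)
  have : χ g = χ (expLift hP n t) := by
    rw [← div_eq_one, ← map_div]
    exact hn _ (by simp [ht])
  rw [this, coordChar_apply, ← ht, ← Circle.exp_intCast_mul, ← hm]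
  exact hc t

theorem coordChar_of_le {n L : ℕ} (h : n ≤ L) (m : ℤ) :
    coordChar P n m = coordChar P L ((∏ i ∈ Ico n L, P i : ℕ) * m) := by
  ext g
  rw [coordChar_apply, coordChar_apply, apply_eq_pow_prod_Ico g.2 h, zpow_mul, zpow_natCast]

theorem coordChar_mul (n : ℕ) (m m' : ℤ) :
    coordChar P n m * coordChar P n m' = coordChar P n (m + m') := by
  ext g
  simp [zpow_add]

theorem coordChar_injective (hP : ∀ i, P i ≠ 0) (n : ℕ) : Function.Injective (coordChar P n) := by
  intro m m' h
  refine sub_eq_zero.mp (Circle.eq_zero_of_forall_zpow_eq_one fun z => ?_)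
  obtain ⟨t, rfl⟩ := Circle.exp_surjective z
  have := DFunLike.congr_fun h (expLift hP n t)
  simp only [coordChar_apply, expLift_apply_self] at this
  rw [zpow_sub, this, mul_inv_cancel]

variable (P) in
def ratOfCoord (n : ℕ) (m : ℤ) : ℚ := m / ∏ i ∈ range n, (P i : ℚ)

theorem ratOfCoord_of_le (hP : ∀ i, P i ≠ 0) {n L : ℕ} (h : n ≤ L) (m : ℤ) :
    ratOfCoord P n m = ratOfCoord P L ((∏ i ∈ Ico n L, P i : ℕ) * m) := by
  have hprod := prod_natCast_ne_zero (K := ℚ) hP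
  rw [ratOfCoord, ratOfCoord, ← prod_range_mul_prod_Ico _ h, div_eq_div_iff (hprod _)
    (mul_ne_zero (hprod _) (hprod _))]
  push_cast
  ring

theorem ratOfCoord_add (n : ℕ) (m m' : ℤ) :
    ratOfCoord P n (m + m') = ratOfCoord P n m + ratOfCoord P n m' := by
  simp [ratOfCoord, add_div]

theorem coordChar_eq_coordChar_iff (hP : ∀ i, P i ≠ 0) {n n' : ℕ} {m m' : ℤ} :
    coordChar P n m = coordChar P n' m' ↔ ratOfCoord P n m = ratOfCoord P n' m' := by
  rw [coordChar_of_le (le_max_left n n'), coordChar_of_le (le_max_right n n'),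
    ratOfCoord_of_le hP (le_max_left n n'), ratOfCoord_of_le hP (le_max_right n n'),
    (coordChar_injective hP _).eq_iff, ratOfCoord, ratOfCoord,
    div_left_inj' (prod_natCast_ne_zero hP _), Int.cast_inj]

noncomputable def charToRat (hP : ∀ i, P i ≠ 0) (χ : solenoid P →ₜ* Circle) : ℚ :=
  ratOfCoord P (exists_eq_coordChar hP χ).choose (exists_eq_coordChar hP χ).choose_spec.choose

theorem charToRat_coordChar (hP : ∀ i, P i ≠ 0) (n : ℕ) (m : ℤ) :
    charToRat hP (coordChar P n m) = ratOfCoord P n m :=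
  ((coordChar_eq_coordChar_iff hP).mp
    (exists_eq_coordChar hP (coordChar P n m)).choose_spec.choose_spec).symm

noncomputable def dualToRat (hP : ∀ i, P i ≠ 0) : Additive (solenoid P →ₜ* Circle) →+ ℚ where
  toFun χ := charToRat hP χ.toMul
  map_zero' := by
    have : (1 : solenoid P →ₜ* Circle) = coordChar P 0 0 := by ext; simp
    simp [this, charToRat_coordChar, ratOfCoord]
  map_add' χ ψ := by
    obtain ⟨n, m, hχ⟩ := exists_eq_coordChar hP χ.toMul
    obtain ⟨n', m', hψ⟩ := exists_eq_coordChar hP ψ.toMul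
    rw [toMul_add, hχ, hψ, coordChar_of_le (le_max_left n n'),
      coordChar_of_le (le_max_right n n'), coordChar_mul, charToRat_coordChar,
      charToRat_coordChar, charToRat_coordChar, ratOfCoord_add]

theorem injective_dualToRat (hP : ∀ i, P i ≠ 0) : Function.Injective (dualToRat hP) := by
  intro χ ψ h
  obtain ⟨n, m, hχ⟩ := exists_eq_coordChar hP χ.toMul
  obtain ⟨n', m', hψ⟩ := exists_eq_coordChar hP ψ.toMul
  change charToRat hP χ.toMul = charToRat hP ψ.toMul at h
  rw [hχ, hψ, charToRat_coordChar, charToRat_coordChar] at h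
  exact Additive.toMul.injective <|
    hχ.trans ((coordChar_eq_coordChar_iff hP).mpr h) |>.trans hψ.symm

theorem range_dualToRat (hP : ∀ i, P i ≠ 0) :
    Set.range (dualToRat hP) =
      {q : ℚ | ∃ (m : ℤ) (n : ℕ), q = (m : ℚ) / ∏ i ∈ range (n + 1), (P i : ℚ)} := by
  ext q
  constructor
  · rintro ⟨χ, rfl⟩
    obtain ⟨n, m, hχ⟩ := exists_eq_coordChar hP χ.toMul
    refine ⟨(P n : ℕ) * m, n, ?_⟩
    change charToRat hP χ.toMul = _
    rw [hχ, charToRat_coordChar, ratOfCoord_of_le hP n.le_succ]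
    simp [ratOfCoord]
  · rintro ⟨m, n, rfl⟩
    exact ⟨.ofMul (coordChar P (n + 1) m), charToRat_coordChar hP _ _⟩

end solenoid

open Finset in
/-- The dual group of the `P`-adic solenoid `Σ_P` (the group of continuous homomorphisms
`Σ_P → 𝕋`, written additively) is isomorphic as an abstract group to the additive
subgroup `{ m / (P 0 * P 1 * ⋯ * P n) : m ∈ ℤ, n ∈ ℕ }` of `ℚ`. -/
theorem stmt_14 (P : ℕ → ℕ) (hP : ∀ i, (P i).Prime) :
    ∃ φ : Additive (ContinuousMonoidHom (solenoid P) Circle) →+ ℚ,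
      Function.Injective φ ∧
      Set.range φ =
        {q : ℚ | ∃ (m : ℤ) (n : ℕ), q = (m : ℚ) / ∏ i ∈ range (n + 1), (P i : ℚ)} :=
  have hP₀ : ∀ i, P i ≠ 0 := fun i => (hP i).ne_zero
  ⟨solenoid.dualToRat hP₀, solenoid.injective_dualToRat hP₀, solenoid.range_dualToRat hP₀⟩
end

section
/- Let Γ be generated by η, ξ₀, ξ₁, … with relations 2^{k_{i+1}}ξ_{i+1} = ξ_i + η (k_i ∈ ℕ⁺, sup k_i = ∞), and let D ⊆ ℚ be a subgroup of the form { m / (p(0)p(1)⋯p(n)) : m ∈ ℤ, n ∈ ℕ } for a sequence of primes p with only finitely many p(i) equal to 2. Then every group homomorphism f : Γ → D is zero. -/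
/-!
Every value of `f` has `2`-adic norm at most `2 ^ M`, where `M` counts the indices with
`p i = 2`. Telescoping the relations gives `ξ 0 + u n • η = 2 ^ t n • ξ n` with
`t n = k 1 + ⋯ + k n` and `u n = ∑ j < n, 2 ^ t j`; after clearing denominators, integers
`x + y * u n` are divisible by `2 ^ t n` for all `n`. The gaps of the binary expansion
`∑ 2 ^ t j` are unbounded, so it is not a rational `2`-adic number: right after a gap longer
than `log₂ (|x| + |y|) + 1` the integer `x + y * u (n + 1)` is smaller than `2 ^ t (n + 1)`,
hence zero, which happens for at most one `n` unless `y = 0`, and then `x = 0` too. Thus `f`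
kills `η` and `ξ 0`, hence every `ξ n`, hence `Γ`.
-/

open Finset

section PadicNorm

variable {ℓ : ℕ} [Fact ℓ.Prime] {ι : Type*} {p : ι → ℕ}

theorem padicNorm_prod_primes (s : Finset ι) (hp : ∀ i ∈ s, (p i).Prime) :
    padicNorm ℓ (∏ i ∈ s, (p i : ℚ)) = (ℓ : ℚ)⁻¹ ^ #{i ∈ s | p i = ℓ} := by
  change IsAbsoluteValue.abvHom (padicNorm ℓ) _ = _
  rw [map_prod]
  trans ∏ i ∈ s, if p i = ℓ then (ℓ : ℚ)⁻¹ else 1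
  · refine prod_congr rfl fun i hi => ?_
    have := Fact.mk (hp i hi)
    split_ifs with h
    · simp [IsAbsoluteValue.abvHom, h, padicNorm.padicNorm_p_of_prime]
    · exact padicNorm.padicNorm_of_prime_of_ne (Ne.symm h)
  · rw [prod_ite, prod_const, prod_const_one, mul_one]

theorem padicNorm_div_prod_primes_le (hp : ∀ i, (p i).Prime) (hfin : {i | p i = ℓ}.Finite)
    (m : ℤ) (s : Finset ι) :
    padicNorm ℓ (m / ∏ i ∈ s, (p i : ℚ)) ≤ (ℓ : ℚ) ^ hfin.toFinset.card := by
  have hℓ : (1 : ℚ) ≤ ℓ := mod_cast (Fact.out : ℓ.Prime).one_le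
  rw [padicNorm.div, padicNorm_prod_primes s fun i _ => hp i, inv_pow, div_inv_eq_mul]
  calc padicNorm ℓ m * (ℓ : ℚ) ^ #{i ∈ s | p i = ℓ} ≤ 1 * (ℓ : ℚ) ^ #{i ∈ s | p i = ℓ} := by
        gcongr; exact padicNorm.of_int m
    _ ≤ (ℓ : ℚ) ^ hfin.toFinset.card := by
        rw [one_mul]
        exact pow_le_pow_right₀ hℓ <| card_le_card fun i hi => by simpa using (mem_filter.mp hi).2

end PadicNorm

theorem padicNorm_two_pow (n : ℕ) : padicNorm 2 ((2 : ℚ) ^ n) = (2 ^ n)⁻¹ := by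
  rw [IsAbsoluteValue.abv_pow (padicNorm 2), ← inv_pow]
  congr
  simpa using padicNorm.padicNorm_p_of_prime (p := 2)

theorem sum_two_pow_lt_two_pow {t : ℕ → ℕ} (ht : Function.Injective t) {n m : ℕ}
    (hm : ∀ j < n, t j < m) : ∑ j ∈ range n, 2 ^ t j < 2 ^ m := by
  simpa using Nat.geomSum_lt (s := (range n).map ⟨t, ht⟩) le_rfl (by simpa using hm)

theorem add_sum_pow_smul_eq_pow_smul {Γ : Type*} [AddCommGroup Γ] {η : Γ} {ξ : ℕ → Γ}
    {k : ℕ → ℕ} {c : ℤ} (hrel : ∀ i, c ^ k (i + 1) • ξ (i + 1) = ξ i + η) (n : ℕ) :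
    ξ 0 + (∑ j ∈ range n, c ^ ∑ i ∈ range j, k (i + 1)) • η =
      c ^ (∑ i ∈ range n, k (i + 1)) • ξ n := by
  induction n with
  | zero => simp
  | succ n ih =>
    rw [sum_range_succ, add_smul, ← add_assoc, ih, ← smul_add, ← hrel, smul_smul, ← pow_add,
      sum_range_succ]

section TwoAdicIrrationality

variable {t : ℕ → ℕ}

theorem eq_zero_of_two_pow_dvd_add_mul_sum (ht : StrictMono t)
    (hgap : ∀ L, ∃ n, L ≤ t (n + 1) - t n) {x y : ℤ}
    (hdvd : ∀ n, (2 : ℤ) ^ t n ∣ x + y * ∑ j ∈ range n, (2 : ℤ) ^ t j) : x = 0 ∧ y = 0 := by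
  set u : ℕ → ℤ := fun n => ∑ j ∈ range n, (2 : ℤ) ^ t j
  have hu_mono : StrictMono u :=
    strictMono_nat_of_lt_succ fun n => by
      simp only [u, sum_range_succ]
      linarith [pow_pos (two_pos (α := ℤ)) (t n)]
  obtain ⟨L, hL⟩ : ∃ L : ℕ, 2 * (|x| + |y|) < 2 ^ L :=
    ⟨(2 * (|x| + |y|)).toNat, (Int.self_le_toNat _).trans_lt (mod_cast Nat.lt_two_pow_self)⟩
  have hvanish : ∀ n, L ≤ t (n + 1) - t n → x + y * u (n + 1) = 0 := by
    intro n hn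
    refine Int.eq_zero_of_abs_lt_dvd (hdvd (n + 1)) ?_
    have hu : u (n + 1) ≤ 2 * 2 ^ t n := by
      have := sum_two_pow_lt_two_pow ht.injective (n := n + 1) (m := t n + 1)
        fun j hj => Nat.lt_succ_of_le (ht.monotone (Nat.le_of_lt_succ hj))
      simp only [u, pow_succ] at this ⊢
      exact_mod_cast this.le.trans (by rw [mul_comm])
    have hgap' : t n + L ≤ t (n + 1) := by have := ht n.lt_add_one; omega
    have hu0 : 0 ≤ u (n + 1) := sum_nonneg fun j _ => by positivity
    have h1 : (1 : ℤ) ≤ 2 ^ t n := one_le_pow₀ one_le_two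
    calc |x + y * u (n + 1)| ≤ |x| + |y| * u (n + 1) := by
          simpa only [abs_mul, abs_of_nonneg hu0] using abs_add_le x (y * u (n + 1))
      _ ≤ 2 * (|x| + |y|) * 2 ^ t n := by nlinarith [abs_nonneg x, abs_nonneg y]
      _ < 2 ^ L * 2 ^ t n := by gcongr
      _ ≤ 2 ^ t (n + 1) := by rw [← pow_add, add_comm]; exact pow_le_pow_right₀ one_le_two hgap'
  have hy : y = 0 := by
    obtain ⟨n₁, h₁⟩ := hgap L
    obtain ⟨n₂, h₂⟩ := hgap (max L (t (n₁ + 1) - t n₁ + 1))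
    have h : y * (u (n₁ + 1) - u (n₂ + 1)) = 0 := by
      linear_combination hvanish n₁ h₁ - hvanish n₂ (le_of_max_le_left h₂)
    refine (mul_eq_zero.mp h).resolve_right fun hu => ?_
    obtain rfl : n₁ = n₂ := by simpa using hu_mono.injective (sub_eq_zero.mp hu)
    have := le_of_max_le_right h₂
    omega
  subst hy
  refine ⟨Int.eq_zero_of_abs_lt_dvd (by simpa using hdvd x.natAbs) ?_, rfl⟩
  calc |x| = x.natAbs := Int.abs_eq_natAbs x
    _ < 2 ^ x.natAbs := mod_cast Nat.lt_two_pow_self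
    _ ≤ 2 ^ t x.natAbs := pow_le_pow_right₀ one_le_two (ht.id_le _)

theorem eq_zero_of_padicNorm_add_mul_sum_le (ht : StrictMono t)
    (hgap : ∀ L, ∃ n, L ≤ t (n + 1) - t n) {a b : ℚ} (M : ℕ)
    (hnorm : ∀ n, padicNorm 2 (a + b * ∑ j ∈ range n, (2 : ℚ) ^ t j) ≤ 2 ^ M / 2 ^ t n) :
    a = 0 ∧ b = 0 := by
  set x : ℤ := 2 ^ M * a.num * b.den
  set y : ℤ := 2 ^ M * b.num * a.den
  have hxy : ∀ n, ((x + y * ∑ j ∈ range n, (2 : ℤ) ^ t j : ℤ) : ℚ) =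
      2 ^ M * a.den * b.den * (a + b * ∑ j ∈ range n, (2 : ℚ) ^ t j) := by
    intro n
    push_cast [x, y, ← Rat.mul_den_eq_num]
    ring
  have hdvd : ∀ n, (2 : ℤ) ^ t n ∣ x + y * ∑ j ∈ range n, (2 : ℤ) ^ t j := by
    intro n
    rw [show (2 : ℤ) ^ t n = ((2 ^ t n : ℕ) : ℤ) by push_cast; rfl, padicNorm.dvd_iff_norm_le, hxy,
      padicNorm.mul, padicNorm.mul, padicNorm.mul, padicNorm_two_pow]
    calc ((2 : ℚ) ^ M)⁻¹ * padicNorm 2 a.den * padicNorm 2 b.den *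
          padicNorm 2 (a + b * ∑ j ∈ range n, (2 : ℚ) ^ t j) ≤
          (2 ^ M)⁻¹ * 1 * 1 * (2 ^ M / 2 ^ t n) := by
          gcongr
          exacts [padicNorm.nonneg _, padicNorm.nonneg _, padicNorm.of_nat (p := 2) _,
            padicNorm.of_nat (p := 2) _, hnorm n]
      _ = (2 : ℚ) ^ (-(t n : ℤ)) := by
          rw [zpow_neg, zpow_natCast, mul_one, mul_one, ← mul_div_assoc,
            inv_mul_cancel₀ (by positivity), one_div]
  simpa [x, y] using eq_zero_of_two_pow_dvd_add_mul_sum ht hgap hdvd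

end TwoAdicIrrationality

open Finset in
/-- Let `Γ` be generated by `η, ξ 0, ξ 1, …` with relations
`2 ^ k (i+1) • ξ (i+1) = ξ i + η` (`k i` positive, `sup k i = ∞`), and let
`D ⊆ ℚ` be the subgroup `{ m / (p 0 * p 1 * ⋯ * p n) : m ∈ ℤ, n ∈ ℕ }` for a sequence
of primes `p` with only finitely many `p i` equal to `2`.  Then every group
homomorphism `f : Γ → D` is zero. -/
theorem stmt_18 (Γ : Type*) [AddCommGroup Γ] (η : Γ) (ξ : ℕ → Γ) (k : ℕ → ℕ)
    (hkpos : ∀ i, 0 < k i) (hksup : ∀ N : ℕ, ∃ i, N ≤ k i)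
    (hrel : ∀ i, (2 ^ k (i + 1) : ℤ) • ξ (i + 1) = ξ i + η)
    (hgen : AddSubgroup.closure ({η} ∪ Set.range ξ) = (⊤ : AddSubgroup Γ))
    (p : ℕ → ℕ) (hp : ∀ i, (p i).Prime) (hp2 : {i : ℕ | p i = 2}.Finite)
    (f : Γ →+ ℚ)
    (hf : ∀ x : Γ, f x ∈
      {q : ℚ | ∃ (m : ℤ) (n : ℕ), q = (m : ℚ) / ∏ i ∈ range (n + 1), (p i : ℚ)}) :
    f = 0 := by
  set t : ℕ → ℕ := fun n => ∑ i ∈ range n, k (i + 1)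
  have ht : StrictMono t := strictMono_nat_of_lt_succ fun n => by simp [t, sum_range_succ, hkpos]
  have hgap : ∀ L, ∃ n, L ≤ t (n + 1) - t n := by
    intro L
    obtain ⟨i, hi⟩ := hksup (max L (k 0 + 1))
    obtain ⟨n, rfl⟩ : ∃ n, i = n + 1 := Nat.exists_eq_succ_of_ne_zero (by rintro rfl; omega)
    exact ⟨n, by simp only [t, sum_range_succ]; omega⟩
  have htel (n : ℕ) : f (ξ 0) + f η * ∑ j ∈ range n, (2 : ℚ) ^ t j = 2 ^ t n * f (ξ n) := by
    simpa [mul_comm] using congrArg f (add_sum_pow_smul_eq_pow_smul hrel n)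
  have hnorm (n : ℕ) : padicNorm 2 (f (ξ 0) + f η * ∑ j ∈ range n, (2 : ℚ) ^ t j) ≤
      2 ^ hp2.toFinset.card / 2 ^ t n := by
    obtain ⟨m, N, hm⟩ := hf (ξ n)
    have hD := padicNorm_div_prod_primes_le hp hp2 m (range (N + 1))
    push_cast at hD
    rw [htel, padicNorm.mul, padicNorm_two_pow, hm, inv_mul_eq_div]
    gcongr
  obtain ⟨hξ0, hη⟩ := eq_zero_of_padicNorm_add_mul_sum_le ht hgap _ hnorm
  refine AddMonoidHom.eq_of_eqOn_dense hgen ?_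
  rintro _ (rfl | ⟨n, rfl⟩)
  · exact hη
  · simpa [hξ0, hη] using (htel n).symm
end
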